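/- Let I = I_{g,(m_1,…,m_n)} ⊆ R and set S = Π_{j,k} x_{j,k}^{d_k − 1}. Then for every matrix A ∈ A_n, the product y_A · S lies in I. -/

import Mathlib

open MvPolynomial Finset

noncomputable section

namespace Paper

open scoped Classical

variable (K : Type) [Field K] (g n : ℕ) (m : Fin n → ℕ)

/-- `d k = m_k + m_{k+1} + ⋯ + m_n + 1` (with `k` zero-indexed). -/
def dd (k : Fin n) : ℕ := (∑ k' ∈ Finset.Ici k, m k') + 1

/-- `M k`: equals `m k` for the last index and `m k - 1` otherwise. -/
def MM (k : Fin n) : ℕ := if k.val = n - 1 then m k else m k - 1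

/-- The membership predicate for the set `𝒜_k` (for `0 ≤ k ≤ n`):
columns (zero-indexed) `< k` have entries bounded by `M` and column sum `m`,
and all later columns vanish. -/
def mem𝒜 (k : ℕ) (A : Fin g → Fin n → ℕ) : Prop :=
  ∀ k' : Fin n,
    (k'.val < k → (∀ j, A j k' ≤ MM n m k') ∧ (∑ j, A j k' = m k')) ∧
    (k ≤ k'.val → ∀ j, A j k' = 0)

/-- The (finite) set `𝒜_k` of admissible `g × n` matrices. -/
def 𝒜 (k : ℕ) : Finset (Fin g → Fin n → ℕ) :=
  (Fintype.piFinset fun _ : Fin g => Fintype.piFinset fun k' : Fin n =>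
      Finset.range (m k' + 1)).filter (mem𝒜 g n m k)

/-- The variables of the ring `R`: the `x_{j,k}` and one `y_A` for each `A ∈ 𝒜_n`. -/
def Var : Type := (Fin g × Fin n) ⊕ {A : Fin g → Fin n → ℕ // A ∈ 𝒜 g n m n}

/-- The variable `x_{j,k}`. -/
def xv (j : Fin g) (k : Fin n) : MvPolynomial (Var g n m) K := X (Sum.inl (j, k))

/-- The variable `y_A` for `A ∈ 𝒜_n`. -/
def yv (B : {A : Fin g → Fin n → ℕ // A ∈ 𝒜 g n m n}) : MvPolynomial (Var g n m) K :=
  X (Sum.inr B)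

/-- The monomial `X^A = ∏_{j,k} x_{j,k}^{A j k}`. -/
def Xpow (A : Fin g → Fin n → ℕ) : MvPolynomial (Var g n m) K :=
  ∏ j : Fin g, ∏ k : Fin n, xv K g n m j k ^ A j k

/-- The polynomial `f`. -/
def ff : MvPolynomial (Var g n m) K :=
  (∑ k : Fin (n - 1), ∑ A ∈ 𝒜 g n m k.val, ∑ j : Fin g,
      Xpow K g n m A
        * xv K g n m j ⟨k.val, by have := k.isLt; omega⟩ ^ m ⟨k.val, by have := k.isLt; omega⟩
        * xv K g n m j ⟨k.val + 1, by have := k.isLt; omega⟩ ^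
            dd n m ⟨k.val + 1, by have := k.isLt; omega⟩)
  + ∑ B : {A : Fin g → Fin n → ℕ // A ∈ 𝒜 g n m n},
      Xpow K g n m B.1 * yv K g n m B

/-- The ideal `I_{g,(m_1,…,m_n)} = (x_{1,1}^d, …, x_{g,1}^d, f)`. -/
def paperIdeal (hn : 0 < n) : Ideal (MvPolynomial (Var g n m) K) :=
  Ideal.span
    ((Set.range fun j : Fin g => xv K g n m j ⟨0, hn⟩ ^ dd n m ⟨0, hn⟩) ∪ {ff K g n m})


/-- The socle witness `S = ∏_{j,k} x_{j,k}^{d_k - 1}`. -/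
def SS : MvPolynomial (Var g n m) K := Xpow K g n m fun _ k => dd n m k - 1

/-!
Columns are numbered from `0`. Call an exponent matrix `E` *exceeding* at `(j, k)` if
`E j k ≥ d_k` while every column `k' < k` of `E` sums to at least `g (d_{k'} - 1)`, the column sum
of `S`. By strong induction on `k`, such an `X^E` lies in `I`. If some earlier entry already
reaches `d_{k'}`, induction applies; otherwise the columns of `E` before `k` are those of `S`.
For `k = 0` the generator `x_{j,0}^d` divides `X^E`. For `k = c + 1` take `A ∈ 𝒜_c` and the
monomial `u` completing the term `X^A x_{j,c}^{m_c} x_{j,c+1}^{d_{c+1}}` of `f` to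
`x_{j,c+1}^{d_{c+1}}` times the columns `≤ c` of `S`; this divides `X^E`, and `f u ∈ I`. Every
other term of `f u` is exceeding at a column `≤ c`: a term of an earlier block at its factor
`x^d`; a term `X^{A'} ⋯` with `A' ≠ A` in `𝒜_c` where an entry of `A'` beats that of `A`; every
other term in column `c`, where it has a nonzero entry in a row `≠ j` (an admissible column there
has two nonzero entries). Finally `y_A S = X^A y_A u` for the `u` completing `X^A` to `S`, and the
same analysis applies to the other terms of `f u`.
-/

theorem mem_of_sum_mem_of_forall_ne {R M ι : Type*} [Ring R] [AddCommGroup M]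
    [Module R M] [DecidableEq ι] (p : Submodule R M) {s : Finset ι} {f : ι → M} {i : ι}
    (hi : i ∈ s) (hs : ∑ x ∈ s, f x ∈ p) (hne : ∀ x ∈ s, x ≠ i → f x ∈ p) : f i ∈ p := by
  rw [← add_sum_erase s f hi] at hs
  exact (p.add_mem_iff_left (p.sum_mem fun x hx ↦ hne x (mem_of_mem_erase hx)
    (ne_of_mem_erase hx))).mp hs

theorem eq_of_forall_le_of_card_mul_le_sum {ι : Type*} {s : Finset ι} {a : ι → ℕ}
    {D : ℕ} (hle : ∀ i ∈ s, a i ≤ D) (hsum : #s * D ≤ ∑ i ∈ s, a i) : ∀ i ∈ s, a i = D := by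
  have hsum' : ∑ i ∈ s, a i = ∑ _i ∈ s, D := by
    rw [sum_const, smul_eq_mul]
    exact le_antisymm (by simpa using sum_le_card_nsmul s a D hle) hsum
  exact (sum_eq_sum_iff_of_le hle).mp hsum'

section

variable {K g n m}

section Monomials

theorem Xpow_add (E F : Fin g → Fin n → ℕ) :
    Xpow K g n m (E + F) = Xpow K g n m E * Xpow K g n m F := by
  simp only [Xpow, Pi.add_apply, pow_add, prod_mul_distrib]

theorem Xpow_dvd_Xpow {E F : Fin g → Fin n → ℕ} (h : E ≤ F) :
    Xpow K g n m E ∣ Xpow K g n m F :=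
  prod_dvd_prod_of_dvd _ _ fun j _ ↦ prod_dvd_prod_of_dvd _ _ fun k _ ↦ pow_dvd_pow _ (h j k)

theorem Xpow_mem_of_le {I : Ideal (MvPolynomial (Var g n m) K)} {E F : Fin g → Fin n → ℕ}
    (h : E ≤ F) (hE : Xpow K g n m E ∈ I) : Xpow K g n m F ∈ I :=
  I.mem_of_dvd (Xpow_dvd_Xpow h) hE

def singleExp (j : Fin g) (k : Fin n) (t : ℕ) : Fin g → Fin n → ℕ :=
  fun j' k' ↦ if j' = j ∧ k' = k then t else 0

theorem xv_pow_eq_Xpow (j : Fin g) (k : Fin n) (t : ℕ) :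
    xv K g n m j k ^ t = Xpow K g n m (singleExp j k t) := by
  rw [Xpow, prod_eq_single j, prod_eq_single k] <;> intros <;> simp_all [singleExp]

end Monomials

section Admissible

variable (m) in
theorem m_lt_dd (k : Fin n) : m k < dd n m k := by
  have : m k ≤ ∑ k' ∈ Ici k, m k' := single_le_sum (fun _ _ ↦ Nat.zero_le _) (mem_Ici.mpr le_rfl)
  rw [dd]
  omega

variable {c : ℕ} {A : Fin g → Fin n → ℕ}

theorem le_m_of_mem_𝒜 (hA : A ∈ 𝒜 g n m c) (j : Fin g) (k : Fin n) : A j k ≤ m k := by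
  have := (mem_filter.mp hA).1
  simp only [Fintype.mem_piFinset, mem_range] at this
  exact Nat.lt_succ_iff.mp (this j k)

theorem le_MM_of_mem_𝒜 (hA : A ∈ 𝒜 g n m c) {k : Fin n} (hk : k.val < c) (j : Fin g) :
    A j k ≤ MM n m k :=
  (((mem_filter.mp hA).2 k).1 hk).1 j

theorem sum_col_of_mem_𝒜 (hA : A ∈ 𝒜 g n m c) {k : Fin n} (hk : k.val < c) :
    ∑ j, A j k = m k :=
  (((mem_filter.mp hA).2 k).1 hk).2

theorem eq_zero_of_mem_𝒜 (hA : A ∈ 𝒜 g n m c) {k : Fin n} (hk : c ≤ k.val) (j : Fin g) :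
    A j k = 0 :=
  ((mem_filter.mp hA).2 k).2 hk j

theorem 𝒜_nonempty_of_le (hA : A ∈ 𝒜 g n m c) {c' : ℕ} (hc' : c' ≤ c) :
    (𝒜 g n m c').Nonempty := by
  refine ⟨fun j k ↦ if k.val < c' then A j k else 0, mem_filter.mpr ⟨?_, fun k ↦ ⟨?_, ?_⟩⟩⟩
  · simp only [Fintype.mem_piFinset, mem_range]
    intro j k
    split_ifs <;> have := le_m_of_mem_𝒜 hA j k <;> omega
  · intro hk
    simp only [if_pos hk]
    exact ⟨le_MM_of_mem_𝒜 hA (by omega), sum_col_of_mem_𝒜 hA (by omega)⟩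
  · intro hk j
    simp only [if_neg (show ¬k.val < c' by omega)]

-- Away from the last column the entries are `≤ m_k - 1` but sum to `m_k`.
theorem exists_ne_row_of_mem_𝒜 (hA : A ∈ 𝒜 g n m c) {k : Fin n} (hk : k.val < c)
    (hkn : k.val + 1 < n) (hm : 1 ≤ m k) (j : Fin g) : ∃ j' ≠ j, 1 ≤ A j' k := by
  by_contra! h
  have hsum : ∑ j', A j' k = A j k :=
    sum_eq_single j (fun j' _ hj' ↦ Nat.lt_one_iff.mp (h j' hj')) (by simp)
  have hle := le_MM_of_mem_𝒜 hA hk j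
  rw [MM, if_neg (by omega)] at hle
  have := sum_col_of_mem_𝒜 hA hk
  omega

theorem exists_lt_of_mem_𝒜_of_ne {A' : Fin g → Fin n → ℕ} (hA : A ∈ 𝒜 g n m c)
    (hA' : A' ∈ 𝒜 g n m c) (hne : A' ≠ A) : ∃ j, ∃ k : Fin n, k.val < c ∧ A j k < A' j k := by
  by_contra! h
  have hle : ∀ p ∈ (univ : Finset (Fin g × Fin n)), A' p.1 p.2 ≤ A p.1 p.2 := fun ⟨j, k⟩ _ ↦ by
    rcases lt_or_ge k.val c with hk | hk
    · exact h j k hk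
    · rw [eq_zero_of_mem_𝒜 hA' hk, eq_zero_of_mem_𝒜 hA hk]
  have hsum : ∑ p : Fin g × Fin n, A' p.1 p.2 = ∑ p : Fin g × Fin n, A p.1 p.2 := by
    simp only [Fintype.sum_prod_type_right]
    refine sum_congr rfl fun k _ ↦ ?_
    rcases lt_or_ge k.val c with hk | hk
    · rw [sum_col_of_mem_𝒜 hA' hk, sum_col_of_mem_𝒜 hA hk]
    · simp only [eq_zero_of_mem_𝒜 hA' hk, eq_zero_of_mem_𝒜 hA hk]
  exact hne (funext₂ fun j k ↦ (sum_eq_sum_iff_of_le hle).mp hsum (j, k) (mem_univ _))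

end Admissible

section TermsOfF

variable (m) in
def xTermExp (b : Fin (n - 1)) (A : Fin g → Fin n → ℕ) (j : Fin g) : Fin g → Fin n → ℕ :=
  A + singleExp j ⟨b, by omega⟩ (m ⟨b, by omega⟩)
    + singleExp j ⟨b + 1, by omega⟩ (dd n m ⟨b + 1, by omega⟩)

theorem xTermExp_apply (b : Fin (n - 1)) (A : Fin g → Fin n → ℕ) (j j' : Fin g) (k : Fin n) :
    xTermExp m b A j j' k = A j' k + (if j' = j ∧ k.val = b then m k else 0)
      + (if j' = j ∧ k.val = b + 1 then dd n m k else 0) := by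
  simp only [xTermExp, singleExp, Pi.add_apply, Fin.ext_iff]
  congr 1; congr 1
  all_goals split_ifs with h <;> first | rfl | exact congrArg _ (Fin.ext h.2.symm)

theorem ff_mul_Xpow (u : Fin g → Fin n → ℕ) :
    ff K g n m * Xpow K g n m u
      = ∑ b : Fin (n - 1), ∑ A ∈ 𝒜 g n m b, ∑ j, Xpow K g n m (xTermExp m b A j + u)
        + ∑ B, yv K g n m B * Xpow K g n m (B.1 + u) := by
  simp only [ff, add_mul, sum_mul, xTermExp, xv_pow_eq_Xpow, Xpow_add]
  congr 1
  exact sum_congr rfl fun B _ ↦ by ring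

variable {hn : 0 < n} {u : Fin g → Fin n → ℕ}

theorem xTerm_mem_of_forall_ne (b : Fin (n - 1)) {A : Fin g → Fin n → ℕ} (hA : A ∈ 𝒜 g n m b)
    (j : Fin g)
    (hx : ∀ (b' : Fin (n - 1)), ∀ A' ∈ 𝒜 g n m b', ∀ j', (b', A', j') ≠ (b, A, j) →
      Xpow K g n m (xTermExp m b' A' j' + u) ∈ paperIdeal K g n m hn)
    (hy : ∀ B : {A : Fin g → Fin n → ℕ // A ∈ 𝒜 g n m n},
      Xpow K g n m (B.1 + u) ∈ paperIdeal K g n m hn) :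
    Xpow K g n m (xTermExp m b A j + u) ∈ paperIdeal K g n m hn := by
  set I := paperIdeal K g n m hn
  have hf : ff K g n m * Xpow K g n m u ∈ I := I.mul_mem_right _ (Ideal.subset_span (Or.inr rfl))
  rw [ff_mul_Xpow, I.add_mem_iff_left (I.sum_mem fun B _ ↦ I.mul_mem_left _ (hy B))] at hf
  have hb := mem_of_sum_mem_of_forall_ne I (mem_univ b) hf fun b' _ hne ↦
    I.sum_mem fun A' hA' ↦ I.sum_mem fun j' _ ↦ hx b' A' hA' j' (by simp [hne])
  have hbA := mem_of_sum_mem_of_forall_ne I hA hb fun A' hA' hne ↦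
    I.sum_mem fun j' _ ↦ hx b A' hA' j' (by simp [hne])
  have hbAj := mem_of_sum_mem_of_forall_ne I (mem_univ j) hbA fun j' _ hne ↦
    hx b A hA j' (by simp [hne])
  exact hbAj

theorem yTerm_mem_of_forall_ne (B : {A : Fin g → Fin n → ℕ // A ∈ 𝒜 g n m n})
    (hx : ∀ (b : Fin (n - 1)), ∀ A ∈ 𝒜 g n m b, ∀ j,
      Xpow K g n m (xTermExp m b A j + u) ∈ paperIdeal K g n m hn)
    (hy : ∀ B' ≠ B, Xpow K g n m (B'.1 + u) ∈ paperIdeal K g n m hn) :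
    yv K g n m B * Xpow K g n m (B.1 + u) ∈ paperIdeal K g n m hn := by
  set I := paperIdeal K g n m hn
  have hf : ff K g n m * Xpow K g n m u ∈ I := I.mul_mem_right _ (Ideal.subset_span (Or.inr rfl))
  rw [ff_mul_Xpow, I.add_mem_iff_right (I.sum_mem fun b _ ↦ I.sum_mem fun A hA ↦
    I.sum_mem fun j _ ↦ hx b A hA j)] at hf
  have hB := mem_of_sum_mem_of_forall_ne I (mem_univ B) hf fun B' _ hne ↦
    I.mul_mem_left _ (hy B' hne)
  exact hB

end TermsOfF

section Exceeds

-- For `A ∈ 𝒜_c`, the monomial `X^A x_{j,c}^{m_c} X^(colExp m c j + complExp m c A)` is `S`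
-- restricted to the columns `≤ c`.
variable (m) in
def complExp (c : ℕ) (A : Fin g → Fin n → ℕ) : Fin g → Fin n → ℕ :=
  fun j k ↦ if k.val < c then dd n m k - 1 - A j k else 0

variable (m) in
def colExp (c : ℕ) (j : Fin g) : Fin g → Fin n → ℕ :=
  fun j' k ↦ if k.val = c then (if j' = j then dd n m k - 1 - m k else dd n m k - 1) else 0

variable (m) in
def Exceeds (k : Fin n) (j : Fin g) (E : Fin g → Fin n → ℕ) : Prop :=
  dd n m k ≤ E j k ∧ ∀ k' < k, g * (dd n m k' - 1) ≤ ∑ j', E j' k'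

variable {c : ℕ} {A A' T : Fin g → Fin n → ℕ}

theorem Exceeds.of_lt {k k' : Fin n} {j j' : Fin g} {E : Fin g → Fin n → ℕ}
    (hE : Exceeds m k j E) (hk' : k' < k) (h : dd n m k' ≤ E j' k') : Exceeds m k' j' E :=
  ⟨h, fun k'' hk'' ↦ hE.2 k'' (hk''.trans hk')⟩

theorem Exceeds.eq_of_lt {k k' : Fin n} {j : Fin g} {E : Fin g → Fin n → ℕ}
    (hE : Exceeds m k j E) (hk' : k' < k) (hlt : ∀ j', E j' k' < dd n m k') (j' : Fin g) :
    E j' k' = dd n m k' - 1 :=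
  eq_of_forall_le_of_card_mul_le_sum (fun j' _ ↦ Nat.le_sub_one_of_lt (hlt j'))
    (by simpa using hE.2 k' hk') j' (mem_univ _)

theorem exceeds_add_complExp (hA : A ∈ 𝒜 g n m c) {k : Fin n} (hk : k.val ≤ c) {j : Fin g}
    (htop : dd n m k ≤ (T + complExp m c A) j k) (hT : ∀ k' < k, m k' ≤ ∑ j', T j' k') :
    Exceeds m k j (T + complExp m c A) := by
  refine ⟨htop, fun k' hk' ↦ ?_⟩
  have hk'c : k'.val < c := by omega
  have hcompl : ∑ j', complExp m c A j' k' + m k' = g * (dd n m k' - 1) := by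
    have hle j' : A j' k' ≤ dd n m k' - 1 := by
      have := le_m_of_mem_𝒜 hA j' k'
      have := m_lt_dd m k'
      omega
    simp only [complExp, if_pos hk'c, ← sum_col_of_mem_𝒜 hA hk'c, ← sum_add_distrib,
      Nat.sub_add_cancel (hle _), sum_const, card_univ, Fintype.card_fin, smul_eq_mul]
  simp only [Pi.add_apply, sum_add_distrib]
  have := hT k' hk'
  omega

theorem le_xTermExp (b : Fin (n - 1)) (A : Fin g → Fin n → ℕ) (j : Fin g) :
    A ≤ xTermExp m b A j := by
  intro j' k
  simp only [xTermExp, Pi.add_apply]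
  omega

theorem m_le_sum_xTermExp (b : Fin (n - 1)) (hA : A ∈ 𝒜 g n m b) (j : Fin g) {k : Fin n}
    (hk : k.val ≤ b) : m k ≤ ∑ j', xTermExp m b A j j' k := by
  rcases hk.lt_or_eq with hk | hk
  · rw [← sum_col_of_mem_𝒜 hA hk]
    exact sum_le_sum fun j' _ ↦ by rw [xTermExp_apply]; omega
  · refine le_trans ?_ (single_le_sum (fun _ _ ↦ Nat.zero_le _) (mem_univ j))
    rw [xTermExp_apply]
    simp [hk]

theorem exceeds_xTermExp_add_complExp (b : Fin (n - 1)) (hA' : A' ∈ 𝒜 g n m b)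
    (hA : A ∈ 𝒜 g n m c) (hb : b.val + 1 ≤ c) {j : Fin g} (hT : xTermExp m b A' j ≤ T) :
    Exceeds m ⟨b + 1, by omega⟩ j (T + complExp m c A) := by
  refine exceeds_add_complExp hA hb ?_ fun k hk ↦
    (m_le_sum_xTermExp b hA' j (Nat.lt_succ_iff.mp hk)).trans
      (sum_le_sum fun j' _ ↦ hT j' k)
  have := hT j ⟨b + 1, by omega⟩
  rw [xTermExp_apply] at this
  simp only [Pi.add_apply, and_self, if_true] at this ⊢
  omega

theorem exists_exceeds_of_ne (hA : A ∈ 𝒜 g n m c) (hA' : A' ∈ 𝒜 g n m c) (hne : A' ≠ A)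
    (hT : A' ≤ T) : ∃ k : Fin n, k.val < c ∧ ∃ j, Exceeds m k j (T + complExp m c A) := by
  obtain ⟨j, k, hk, hlt⟩ := exists_lt_of_mem_𝒜_of_ne hA hA' hne
  refine ⟨k, hk, j, exceeds_add_complExp hA hk.le ?_ fun k' hk' ↦ ?_⟩
  · have : A' j k ≤ T j k := hT j k
    have := m_lt_dd m k
    have := le_m_of_mem_𝒜 hA j k
    simp only [Pi.add_apply, complExp, if_pos hk]
    omega
  · rw [← sum_col_of_mem_𝒜 hA' (by omega)]
    exact sum_le_sum fun j' _ ↦ hT j' k'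

theorem exceeds_add_colExp_add_complExp {k : Fin n} (hA : A ∈ 𝒜 g n m k) {j j' : Fin g}
    (hj : j' ≠ j) (h1 : 1 ≤ T j' k) (hT : ∀ k' < k, m k' ≤ ∑ j'', T j'' k') :
    Exceeds m k j' (T + colExp m k j + complExp m k A) := by
  refine exceeds_add_complExp hA le_rfl ?_ fun k' hk' ↦
    (hT k' hk').trans (sum_le_sum fun j'' _ ↦ Nat.le_add_right _ _)
  simp only [Pi.add_apply, colExp, complExp, if_neg hj, lt_irrefl, ↓reduceIte]
  omega

end Exceeds

section Reduction

variable {A : Fin g → Fin n → ℕ}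

theorem xTermExp_add_colExp_add_complExp_le {c : Fin n} (hc : c.val + 1 < n)
    (hA : A ∈ 𝒜 g n m c) (j : Fin g) {E : Fin g → Fin n → ℕ}
    (hE : ∀ k : Fin n, k.val ≤ c → ∀ j', E j' k = dd n m k - 1)
    (htop : dd n m ⟨c + 1, hc⟩ ≤ E j ⟨c + 1, hc⟩) :
    xTermExp m ⟨c, by omega⟩ A j + (colExp m c j + complExp m c A) ≤ E := by
  intro j' k
  have := le_m_of_mem_𝒜 hA j' k
  have := m_lt_dd m k
  simp only [Pi.add_apply, xTermExp_apply, colExp, complExp]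
  rcases le_or_gt k.val c with hk | hk
  · have := hE k hk j'
    rcases hk.lt_or_eq with hk | hk
    · split_ifs <;> omega
    · have : A j' k = 0 := eq_zero_of_mem_𝒜 hA hk.ge j'
      split_ifs <;> omega
  · have : A j' k = 0 := eq_zero_of_mem_𝒜 hA hk.le j'
    by_cases htop' : j' = j ∧ k.val = c + 1
    · obtain ⟨rfl, hk'⟩ := htop'
      obtain rfl : k = ⟨c + 1, hc⟩ := Fin.ext hk'
      simp only [and_self, ↓reduceIte]
      split_ifs <;> omega
    · split_ifs <;> omega

theorem Xpow_xTermExp_add_colExp_add_complExp_mem {hn : 0 < n}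
    (hm : ∀ k : Fin n, k.val + 2 ≤ n → 1 ≤ m k) {c : Fin n} (hc : c.val + 1 < n) (hA : A ∈ 𝒜 g n m c) (j : Fin g)
    (ih : ∀ k : Fin n, k.val ≤ c → ∀ j E, Exceeds m k j E →
      Xpow K g n m E ∈ paperIdeal K g n m hn) :
    Xpow K g n m (xTermExp m ⟨c, by omega⟩ A j + (colExp m c j + complExp m c A))
      ∈ paperIdeal K g n m hn := by
  have hmc : 1 ≤ m c := hm c (by omega)
  refine xTerm_mem_of_forall_ne _ hA j (fun b A' hA' j' hne ↦ ?_) fun B ↦ ?_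
  · rw [← add_assoc]
    obtain ⟨b, hb⟩ := b
    rcases lt_trichotomy b c with hlt | rfl | hgt
    · exact ih ⟨b + 1, by omega⟩ hlt _ _
        (exceeds_xTermExp_add_complExp _ hA' hA hlt le_self_add)
    by_cases hAA : A' = A
    · subst hAA
      have hj : j' ≠ j := fun h ↦ hne (by rw [h])
      refine ih c le_rfl _ _ (exceeds_add_colExp_add_complExp hA hj ?_
        fun k hk ↦ m_le_sum_xTermExp _ hA' j' hk.le)
      rw [xTermExp_apply]
      simp only [and_self, ↓reduceIte]
      omega
    · obtain ⟨k, hk, j₀, h⟩ :=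
        exists_exceeds_of_ne hA hA' hAA ((le_xTermExp _ A' j').trans le_self_add)
      exact ih k hk.le _ _ h
    · obtain ⟨j₀, hj₀, h1⟩ := exists_ne_row_of_mem_𝒜 hA' hgt hc hmc j
      refine ih c le_rfl _ _ (exceeds_add_colExp_add_complExp hA hj₀ ?_
        fun k hk ↦ m_le_sum_xTermExp _ hA' j' (by show k.val ≤ b; omega))
      rw [xTermExp_apply]
      omega
  · rw [← add_assoc]
    obtain ⟨j₀, hj₀, h1⟩ := exists_ne_row_of_mem_𝒜 B.2 c.isLt hc hmc j
    exact ih c le_rfl _ _ (exceeds_add_colExp_add_complExp hA hj₀ h1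
      fun k _ ↦ (sum_col_of_mem_𝒜 B.2 k.isLt).ge)

theorem Xpow_mem_of_dd_le {hn : 0 < n} {E : Fin g → Fin n → ℕ} (j : Fin g)
    (h : dd n m ⟨0, hn⟩ ≤ E j ⟨0, hn⟩) : Xpow K g n m E ∈ paperIdeal K g n m hn := by
  have hgen : Xpow K g n m (singleExp j ⟨0, hn⟩ (dd n m ⟨0, hn⟩)) ∈ paperIdeal K g n m hn := by
    rw [← xv_pow_eq_Xpow]
    exact Ideal.subset_span (Or.inl ⟨j, rfl⟩)
  refine Xpow_mem_of_le (fun j' k ↦ ?_) hgen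
  simp only [singleExp]
  split_ifs with hjk
  · obtain ⟨rfl, rfl⟩ := hjk
    exact h
  · exact Nat.zero_le _

theorem Xpow_mem_of_exceeds {hn : 0 < n} (hm : ∀ k : Fin n, k.val + 2 ≤ n → 1 ≤ m k)
    (hA : A ∈ 𝒜 g n m n) (k : Fin n) :
    ∀ j E, Exceeds m k j E → Xpow K g n m E ∈ paperIdeal K g n m hn := by
  induction k using WellFoundedLT.induction with | _ k ih => ?_
  intro j E hE
  by_cases hover : ∃ k' < k, ∃ j', dd n m k' ≤ E j' k'
  · obtain ⟨k', hk', j', h⟩ := hover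
    exact ih k' hk' j' E (hE.of_lt hk' h)
  push Not at hover
  obtain ⟨_ | c, hk⟩ := k
  · exact Xpow_mem_of_dd_le j hE.1
  obtain ⟨A', hA'⟩ := 𝒜_nonempty_of_le hA (c' := c) (by omega)
  have hlt : ∀ k' : Fin n, k'.val ≤ c → k' < ⟨c + 1, hk⟩ := fun _ ↦ Nat.lt_succ_of_le
  exact Xpow_mem_of_le
    (xTermExp_add_colExp_add_complExp_le (c := ⟨c, by omega⟩) hk hA' j
      (fun k' hk' ↦ hE.eq_of_lt (hlt k' hk') (hover k' (hlt k' hk'))) hE.1)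
    (Xpow_xTermExp_add_colExp_add_complExp_mem hm hk hA' j fun k' hk' ↦ ih k' (hlt k' hk'))

end Reduction

end

theorem statement2 (hn : 0 < n)
    (hm2 : ∀ i : Fin n, i.val + 2 < n → 2 ≤ m i)
    (hm1 : ∀ i : Fin n, i.val + 2 = n → 1 ≤ m i)
    (A : {A : Fin g → Fin n → ℕ // A ∈ 𝒜 g n m n}) :
    yv K g n m A * SS K g n m ∈ paperIdeal K g n m hn := by
  have hm : ∀ k : Fin n, k.val + 2 ≤ n → 1 ≤ m k := fun k hk ↦
    hk.lt_or_eq.elim (fun hk ↦ one_le_two.trans (hm2 k hk)) (hm1 k)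
  have hS : SS K g n m = Xpow K g n m (A.1 + complExp m n A.1) := by
    refine congrArg _ (funext₂ fun j k ↦ ?_)
    have := le_m_of_mem_𝒜 A.2 j k
    have := m_lt_dd m k
    simp only [Pi.add_apply, complExp, if_pos k.isLt]
    omega
  rw [hS]
  refine yTerm_mem_of_forall_ne A (fun b A' hA' j ↦ ?_) fun B hB ↦ ?_
  · exact Xpow_mem_of_exceeds hm A.2 _ _ _
      (exceeds_xTermExp_add_complExp b hA' A.2 (by omega) le_rfl)
  · obtain ⟨k, -, j, h⟩ := exists_exceeds_of_ne A.2 B.2 (Subtype.coe_ne_coe.mpr hB) le_rfl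
    exact Xpow_mem_of_exceeds hm A.2 k j _ h

end Paper
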